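/- Let R = k[[x,y,z]]/(x²y+z²) for a field k, and let φ₁ be the 2×2 matrix with rows (0,−y) and (x²,0). Then φ₁² = −x²y·id₂, and the trace ideal of M = coker(z·id₂ − φ₁) over R equals (x², y, z). -/

import Mathlib

set_option synthInstance.maxHeartbeats 1000000
set_option maxHeartbeats 1000000

open MvPowerSeries Finsupp

namespace TIAux


variable {K : Type*} [CommRing K]

lemma coeffXpm (s : Fin 3) (n : ℕ) (f : MvPowerSeries (Fin 3) K) (m : Fin 3 →₀ ℕ) :
    MvPowerSeries.coeff m (MvPowerSeries.X s ^ n * f)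
      = if Finsupp.single s n ≤ m then MvPowerSeries.coeff (m - Finsupp.single s n) f else 0 := by
  rw [MvPowerSeries.X_pow_eq, MvPowerSeries.coeff_monomial_mul]
  split_ifs <;> simp

lemma decomp (F : MvPowerSeries (Fin 3) K) (h0 : MvPowerSeries.coeff 0 F = 0)
    (h1 : MvPowerSeries.coeff (Finsupp.single 0 1) F = 0) :
    ∃ p q r : MvPowerSeries (Fin 3) K,
      F = X 0 ^ 2 * p + X 1 ^ 1 * q + X 2 ^ 1 * r := by
  classical
  refine ⟨id (α := MvPowerSeries (Fin 3) K) (fun m => if m 1 = 0 ∧ m 2 = 0 then MvPowerSeries.coeff (m + Finsupp.single 0 2) F else 0),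
    id (α := MvPowerSeries (Fin 3) K) (fun m => MvPowerSeries.coeff (m + Finsupp.single 1 1) F),
    id (α := MvPowerSeries (Fin 3) K) (fun m => if m 1 = 0 then MvPowerSeries.coeff (m + Finsupp.single 2 1) F else 0), ?_⟩
  ext m
  rw [map_add, map_add, coeffXpm, coeffXpm, coeffXpm]
  simp only [MvPowerSeries.coeff_apply, show ∀ (g : (Fin 3 →₀ ℕ) → K) d,
    (id (α := MvPowerSeries (Fin 3) K) g) d = g d from fun _ _ => rfl, Finsupp.single_le_iff, Finsupp.tsub_apply,
    Finsupp.single_apply]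
  norm_num
  rcases eq_or_ne (m 1) 0 with hy | hy
  · rcases eq_or_ne (m 2) 0 with hz | hz
    · rcases le_or_gt 2 (m 0) with hx | hx
      · have e1 : (m - Finsupp.single 0 2) + Finsupp.single 0 2 = m :=
          tsub_add_cancel_of_le (Finsupp.single_le_iff.mpr hx)
        simp [hy, hz, hx, e1, Nat.lt_of_lt_of_le, (by omega : ¬ 1 ≤ m 1), (by omega : ¬ 1 ≤ m 2)]
      · have hm : m = Finsupp.single 0 (m 0) := by
          ext i; fin_cases i <;> simp [hy, hz]
        have hF : F m = 0 := by
          interval_cases h : m 0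
          · rw [hm]; simpa using (MvPowerSeries.coeff_apply F _).symm.trans h0
          · rw [hm]; simpa using (MvPowerSeries.coeff_apply F _).symm.trans h1
        simp [hy, hz, hF, (by omega : ¬ 1 ≤ m 1), (by omega : ¬ 1 ≤ m 2)]
        exact fun h => absurd h (by omega : ¬ 2 ≤ m 0)
    · have e1 : (m - Finsupp.single 2 1) + Finsupp.single 2 1 = m :=
        tsub_add_cancel_of_le (Finsupp.single_le_iff.mpr (by omega))
      simp [hy, hz, e1, (by omega : 1 ≤ m 2), (by omega : ¬ 1 ≤ m 1)]
  · have e1 : (m - Finsupp.single 1 1) + Finsupp.single 1 1 = m :=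
      tsub_add_cancel_of_le (Finsupp.single_le_iff.mpr (by omega))
    simp [hy, e1, (by omega : 1 ≤ m 1)]

lemma coeff_vanish (F G H C : MvPowerSeries (Fin 3) K)
    (h : X 2 * F = X 0 ^ 2 * G + X 1 * H + C * (X 0 ^ 2 * X 1 + X 2 ^ 2)) :
    MvPowerSeries.coeff 0 F = 0 ∧ MvPowerSeries.coeff (Finsupp.single 0 1) F = 0 := by
  have h' : (X 2 : MvPowerSeries (Fin 3) K) ^ 1 * F
      = X 0 ^ 2 * G + X 1 ^ 1 * H + (X 0 ^ 2 * (X 1 * C) + X 2 ^ 2 * C) := by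
    linear_combination h
  constructor
  · have := congrArg (MvPowerSeries.coeff (Finsupp.single 2 1)) h'
    simp only [map_add, coeffXpm] at this
    simpa [Finsupp.single_le_iff, Finsupp.single_apply] using this
  · have := congrArg (MvPowerSeries.coeff (Finsupp.single 0 1 + Finsupp.single 2 1)) h'
    simp only [map_add, coeffXpm] at this
    simp only [Finsupp.single_le_iff, Finsupp.coe_add, Pi.add_apply, Finsupp.single_apply] at this
    norm_num at this
    simpa using this

end TIAux



/-- The trace ideal of an `R`-module `M`: the sum of the images of all `R`-linear maps
`M → R`. -/
def traceIdeal (R : Type*) [CommRing R] (M : Type*) [AddCommGroup M] [Module R M] :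
    Ideal R :=
  ⨆ f : M →ₗ[R] R, LinearMap.range f

/-- The ring `R = k⟦x,y,z⟧/(x²y + z²)` (the Whitney umbrella). -/
noncomputable abbrev WU (k : Type*) [Field k] : Type _ :=
  MvPowerSeries (Fin 3) k ⧸
    Ideal.span {(MvPowerSeries.X 0 : MvPowerSeries (Fin 3) k) ^ 2 * MvPowerSeries.X 1
      + MvPowerSeries.X 2 ^ 2}

/-- The image of `x` in `R = k⟦x,y,z⟧/(x²y + z²)`. -/
noncomputable def x11 (k : Type*) [Field k] : WU k :=
  Ideal.Quotient.mk _ (MvPowerSeries.X 0 : MvPowerSeries (Fin 3) k)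

/-- The image of `y` in `R = k⟦x,y,z⟧/(x²y + z²)`. -/
noncomputable def y11 (k : Type*) [Field k] : WU k :=
  Ideal.Quotient.mk _ (MvPowerSeries.X 1 : MvPowerSeries (Fin 3) k)

/-- The image of `z` in `R = k⟦x,y,z⟧/(x²y + z²)`. -/
noncomputable def z11 (k : Type*) [Field k] : WU k :=
  Ideal.Quotient.mk _ (MvPowerSeries.X 2 : MvPowerSeries (Fin 3) k)

namespace TIAux

variable (k : Type*) [Field k]


variable (k : Type*) [Field k]

local notation "PI" => Ideal.span {(MvPowerSeries.X 0 : MvPowerSeries (Fin 3) k) ^ 2 * MvPowerSeries.X 1 + MvPowerSeries.X 2 ^ 2}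

lemma quot_mem (A : MvPowerSeries (Fin 3) k)
    (h0 : MvPowerSeries.coeff 0 A = 0)
    (h1 : MvPowerSeries.coeff (Finsupp.single 0 1) A = 0) :
    Ideal.Quotient.mk PI A ∈ Ideal.span {(x11 k) ^ 2, y11 k, z11 k} := by
  obtain ⟨p, q, r, rfl⟩ := decomp A h0 h1
  simp only [map_add, map_mul, map_pow, pow_one]
  refine Ideal.add_mem _ (Ideal.add_mem _ ?_ ?_) ?_
  · exact Ideal.mul_mem_right _ _ (Ideal.subset_span (Set.mem_insert _ _))
  · exact Ideal.mul_mem_right _ _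
      (Ideal.subset_span (Set.mem_insert_of_mem _ (Set.mem_insert _ _)))
  · exact Ideal.mul_mem_right _ _
      (Ideal.subset_span (Set.mem_insert_of_mem _ (Set.mem_insert_of_mem _ rfl)))

lemma span_of_rels (a b : WU k)
    (h1 : z11 k * a = (x11 k) ^ 2 * b) (h2 : y11 k * a = -(z11 k * b)) :
    a ∈ Ideal.span {(x11 k) ^ 2, y11 k, z11 k}
      ∧ b ∈ Ideal.span {(x11 k) ^ 2, y11 k, z11 k} := by
  obtain ⟨A, rfl⟩ := Ideal.Quotient.mk_surjective a
  obtain ⟨B, rfl⟩ := Ideal.Quotient.mk_surjective b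
  have e1 : Ideal.Quotient.mk PI (MvPowerSeries.X 2 * A - MvPowerSeries.X 0 ^ 2 * B) = 0 := by
    rw [map_sub, map_mul, map_mul, map_pow]
    exact sub_eq_zero.mpr h1
  have e2 : Ideal.Quotient.mk PI (MvPowerSeries.X 1 * A + MvPowerSeries.X 2 * B) = 0 := by
    rw [map_add, map_mul, map_mul]
    rw [show (Ideal.Quotient.mk PI (MvPowerSeries.X 1)) * (Ideal.Quotient.mk PI A) = -(z11 k * Ideal.Quotient.mk PI B) from h2]
    exact neg_add_cancel _
  obtain ⟨C, hC⟩ := Ideal.mem_span_singleton'.mp (Ideal.Quotient.eq_zero_iff_mem.mp e1)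
  obtain ⟨D, hD⟩ := Ideal.mem_span_singleton'.mp (Ideal.Quotient.eq_zero_iff_mem.mp e2)
  have hA := coeff_vanish A B 0 C (by linear_combination -hC)
  have hB := coeff_vanish B 0 (-A) D (by linear_combination -hD)
  exact ⟨quot_mem k A hA.1 hA.2, quot_mem k B hB.1 hB.2⟩

end TIAux

lemma apply_mem_traceIdeal {R : Type*} [CommRing R] {M : Type*} [AddCommGroup M] [Module R M]
    (f : M →ₗ[R] R) (m : M) : f m ∈ traceIdeal R M :=
  le_iSup (fun f : M →ₗ[R] R => LinearMap.range f) f ⟨m, rfl⟩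

def rowMap {R : Type*} [CommRing R] (r : Fin 2 → R) : (Fin 2 → R) →ₗ[R] R where
  toFun v := r 0 * v 0 + r 1 * v 1
  map_add' u v := by simp only [Pi.add_apply]; ring
  map_smul' c v := by simp only [Pi.smul_apply, smul_eq_mul, RingHom.id_apply]; ring

/-- Let `R = k⟦x,y,z⟧/(x²y + z²)` and `φ₁ = !![0, -y; x², 0]`.
Then `φ₁² = -x²y • id₂`, and the trace ideal of `M = coker(z·id₂ - φ₁)` over `R`
equals `(x², y, z)`. -/
theorem traceIdeal_whitney_umbrella
    (k : Type*) [Field k] :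
    (!![0, -y11 k; (x11 k) ^ 2, 0] * !![0, -y11 k; (x11 k) ^ 2, 0]
        = -(((x11 k) ^ 2 * y11 k) • (1 : Matrix (Fin 2) (Fin 2) (WU k)))) ∧
      traceIdeal (WU k) ((Fin 2 → WU k) ⧸ LinearMap.range (Matrix.mulVecLin
          (z11 k • (1 : Matrix (Fin 2) (Fin 2) (WU k)) - !![0, -y11 k; (x11 k) ^ 2, 0])))
        = Ideal.span {(x11 k) ^ 2, y11 k, z11 k} := by
  have rel0 : (x11 k) ^ 2 * y11 k + (z11 k) ^ 2 = 0 := by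
    have h : (x11 k) ^ 2 * y11 k + (z11 k) ^ 2
        = Ideal.Quotient.mk _ ((MvPowerSeries.X 0 : MvPowerSeries (Fin 3) k) ^ 2
            * MvPowerSeries.X 1 + MvPowerSeries.X 2 ^ 2) := by
      rw [map_add, map_mul, map_pow, map_pow]; rfl
    rw [h, Ideal.Quotient.eq_zero_iff_mem]
    exact Ideal.subset_span rfl
  constructor
  · ext i j
    fin_cases i <;> fin_cases j <;>
      simp [Matrix.mul_apply, Fin.sum_univ_two, Matrix.one_apply] <;> ring
  · set φ : Matrix (Fin 2) (Fin 2) (WU k) := !![0, -y11 k; (x11 k) ^ 2, 0] with hφ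
    set Amat : Matrix (Fin 2) (Fin 2) (WU k) :=
      z11 k • (1 : Matrix (Fin 2) (Fin 2) (WU k)) - φ with hAmat
    set N := LinearMap.range Amat.mulVecLin with hN
    have entries : Amat 0 0 = z11 k ∧ Amat 0 1 = y11 k ∧ Amat 1 0 = -(x11 k) ^ 2
        ∧ Amat 1 1 = z11 k := by
      refine ⟨?_, ?_, ?_, ?_⟩ <;>
        simp [hAmat, hφ, Matrix.sub_apply, Matrix.smul_apply, Matrix.one_apply, smul_eq_mul]
    obtain ⟨e00, e01, e10, e11⟩ := entries
    apply le_antisymm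
    · apply iSup_le
      intro f
      rintro g ⟨mq, rfl⟩
      obtain ⟨v, rfl⟩ := Submodule.Quotient.mk_surjective N mq
      have key : ∀ u : Fin 2 → WU k, f (Submodule.Quotient.mk u)
          = u 0 * f (Submodule.Quotient.mk (Pi.single 0 1))
            + u 1 * f (Submodule.Quotient.mk (Pi.single 1 1)) := by
        intro u
        have hu : u = u 0 • (Pi.single 0 1 : Fin 2 → WU k) + u 1 • (Pi.single 1 1 : Fin 2 → WU k) := by
          ext i; fin_cases i <;> simp
        conv_lhs => rw [hu]
        rw [Submodule.Quotient.mk_add, Submodule.Quotient.mk_smul, Submodule.Quotient.mk_smul,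
          map_add, map_smul, map_smul, smul_eq_mul, smul_eq_mul]
      have rel : ∀ w : Fin 2 → WU k,
          (Amat.mulVec w) 0 * f (Submodule.Quotient.mk (Pi.single 0 1))
            + (Amat.mulVec w) 1 * f (Submodule.Quotient.mk (Pi.single 1 1)) = 0 := by
        intro w
        rw [← key]
        have hz : Submodule.Quotient.mk (p := N) (Amat.mulVec w) = 0 :=
          (Submodule.Quotient.mk_eq_zero N).mpr ⟨w, rfl⟩
        rw [hz, map_zero]
      have h1 := rel (Pi.single 0 1)
      have h2 := rel (Pi.single 1 1)
      simp only [Matrix.mulVec_single_one, Matrix.col_apply, mul_one, e00, e01, e10, e11] at h1 h2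
      obtain ⟨ha, hb⟩ := TIAux.span_of_rels k
        (f (Submodule.Quotient.mk (Pi.single 0 1)))
        (f (Submodule.Quotient.mk (Pi.single 1 1)))
        (by linear_combination h1) (by linear_combination h2)
      rw [key]
      exact Ideal.add_mem _ (Ideal.mul_mem_left _ _ ha) (Ideal.mul_mem_left _ _ hb)
    · rw [Ideal.span_le]
      have build : ∀ r : Fin 2 → WU k,
          (∀ w : Fin 2 → WU k, rowMap r (Amat.mulVec w) = 0) →
          ∀ i : Fin 2, r i ∈ traceIdeal (WU k) ((Fin 2 → WU k) ⧸ N) := by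
        intro r hr i
        let F : ((Fin 2 → WU k) ⧸ N) →ₗ[WU k] WU k :=
          Submodule.liftQ N (rowMap r) (by rintro _ ⟨w, rfl⟩; exact hr w)
        have hFi : r i = F (Submodule.Quotient.mk (Pi.single i 1)) := by
          rw [show F (Submodule.Quotient.mk (Pi.single i 1)) = rowMap r (Pi.single i 1) from
            Submodule.liftQ_apply N (rowMap r) _]
          fin_cases i <;> simp [rowMap]
        rw [hFi]
        exact apply_mem_traceIdeal F _
      have van1 : ∀ w : Fin 2 → WU k, rowMap ![(x11 k) ^ 2, z11 k] (Amat.mulVec w) = 0 := by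
        intro w
        simp only [rowMap, LinearMap.coe_mk, AddHom.coe_mk, Matrix.mulVec, dotProduct,
          Fin.sum_univ_two, e00, e01, e10, e11, Matrix.cons_val_zero, Matrix.cons_val_one,
          Matrix.head_cons]
        linear_combination (w 1) * rel0
      have van2 : ∀ w : Fin 2 → WU k, rowMap ![z11 k, -y11 k] (Amat.mulVec w) = 0 := by
        intro w
        simp only [rowMap, LinearMap.coe_mk, AddHom.coe_mk, Matrix.mulVec, dotProduct,
          Fin.sum_univ_two, e00, e01, e10, e11, Matrix.cons_val_zero, Matrix.cons_val_one,
          Matrix.head_cons]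
        linear_combination (w 0) * rel0
      rintro g (rfl | rfl | rfl)
      · simpa using build ![(x11 k) ^ 2, z11 k] van1 0
      · have := build ![z11 k, -y11 k] van2 1
        simp only [Matrix.cons_val_one, Matrix.head_cons] at this
        simpa using (traceIdeal (WU k) _).neg_mem this
      · simpa using build ![z11 k, -y11 k] van2 0
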